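/- arXiv:0905.4090 — 5 statements merged into one kernel-verified Lean document; each statement's English description precedes it below -/
import Mathlib

section
/- Let f : X → Y be an antitone Galois connection between orthomodular lattices and g : Z → X another such connection with f_*(g_*(z)^⊥) = 1 for all z ∈ Z. Set k = f^*(1). Then the maps h_*(z) = g_*(z) ∧ k and h^*(u) = g^*(u) (for u ≤ k) form an antitone Galois connection from Z to ↓k, and k_*(h_*(z)^{⊥_k})= g_*(z) for all z ∈ Z, where ⊥_k is the orthocomplement of ↓k. -/
class Ortholattice (α : Type*) extends Lattice α, BoundedOrder α where
  ocompl : α → α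
  ocompl_ocompl : ∀ x : α, ocompl (ocompl x) = x
  ocompl_antitone : ∀ x y : α, x ≤ y → ocompl y ≤ ocompl x
  inf_ocompl : ∀ x : α, x ⊓ ocompl x = ⊥

postfix:max "ᗮ" => Ortholattice.ocompl

class OrthomodularLattice (α : Type*) extends Ortholattice α where
  orthomodular : ∀ x y : α, x ≤ y → y = x ⊔ (xᗮ ⊓ y)

/-- The kernel of a morphism f : X → Y in OMLatGal: with k = f^*(1), the maps
h_*(z) = g_*(z) ⊓ k and h^*(u) = g^*(u) form a Galois connection Z → ↓k, and
k ∘ h = g (on the f_*-components). -/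
theorem ker_mediating (X Y Z : Type*)
    [OrthomodularLattice X] [OrthomodularLattice Y] [OrthomodularLattice Z]
    (fs : X → Y) (fc : Y → X)
    (hf : ∀ (x : X) (y : Y), x ≤ fc y ↔ y ≤ fs x)
    (gs : Z → X) (gc : X → Z)
    (hg : ∀ (z : Z) (x : X), z ≤ gc x ↔ x ≤ gs z)
    (hzero : ∀ z : Z, fs ((gs z)ᗮ) = ⊤) :
    (∀ u : X, u ≤ fc ⊤ → ∀ z : Z, u ≤ gs z ⊓ fc ⊤ ↔ z ≤ gc u) ∧
    (∀ z : Z, ((fc ⊤) ⊓ (gs z ⊓ fc ⊤)ᗮ)ᗮ = gs z) := by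
  constructor
  · intro u hu z
    constructor
    · intro h
      exact (hg z u).mpr (le_trans h inf_le_left)
    · intro h
      exact le_inf ((hg z u).mp h) hu
  · intro z
    set a := gs z with ha
    set k := fc ⊤ with hk
    have hak : aᗮ ≤ k := (hf _ ⊤).mpr (by rw [hzero z])
    have h1 : aᗮ ≤ k ⊓ (a ⊓ k)ᗮ :=
      le_inf hak (Ortholattice.ocompl_antitone _ _ inf_le_left)
    have h2 := OrthomodularLattice.orthomodular _ _ h1
    rw [Ortholattice.ocompl_ocompl] at h2
    have h3 : a ⊓ (k ⊓ (a ⊓ k)ᗮ) = ⊥ := by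
      rw [← inf_assoc]
      exact Ortholattice.inf_ocompl _
    rw [h3, sup_bot_eq] at h2
    rw [h2, Ortholattice.ocompl_ocompl]
end

section
/- If D is a dagger kernel category, then its dagger Karoubi envelope has dagger kernels: for f : (X,s) → (Y,t) with k = ker(f) in D, the restriction s' = k† ∘ s ∘ k is a self-adjoint idempotent on K, and s ∘ k : (K, s') → (X, s) is a dagger kernel of f in the dagger Karoubi envelope. -/
open CategoryTheory

/-- A dagger category. -/
class DaggerCategory (C : Type*) [Category C] where
  dag : ∀ {X Y : C}, (X ⟶ Y) → (Y ⟶ X)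
  dag_dag : ∀ {X Y : C} (f : X ⟶ Y), dag (dag f) = f
  dag_id : ∀ X : C, dag (𝟙 X) = 𝟙 X
  dag_comp : ∀ {X Y Z : C} (f : X ⟶ Y) (g : Y ⟶ Z), dag (f ≫ g) = dag g ≫ dag f

/-- A dagger kernel category: a dagger category with zero morphisms and
dagger kernels. -/
class DaggerKernelCategory (C : Type*) [Category C] extends DaggerCategory C where
  zero : ∀ X Y : C, X ⟶ Y
  zero_comp : ∀ {X Y Z : C} (f : Y ⟶ Z), zero X Y ≫ f = zero X Z
  comp_zero : ∀ {X Y Z : C} (f : X ⟶ Y), f ≫ zero Y Z = zero X Z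
  Ker : ∀ {X Y : C}, (X ⟶ Y) → C
  ker : ∀ {X Y : C} (f : X ⟶ Y), Ker f ⟶ X
  ker_comp : ∀ {X Y : C} (f : X ⟶ Y), ker f ≫ f = zero _ _
  ker_dagger_mono : ∀ {X Y : C} (f : X ⟶ Y), ker f ≫ dag (ker f) = 𝟙 (Ker f)
  ker_lift : ∀ {X Y Z : C} (f : X ⟶ Y) (g : Z ⟶ X), g ≫ f = zero _ _ →
    ∃! h : Z ⟶ Ker f, h ≫ ker f = g

open DaggerCategory DaggerKernelCategory in
/-- The dagger Karoubi envelope of a dagger kernel category has dagger kernels: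
for a morphism f : (X,s) → (Y,t), with k = ker f and s' = k† ∘ s ∘ k, the map
s ∘ k : (K,s') → (X,s) is a dagger kernel of f. -/
theorem karoubi_dagger_kernel (C : Type*) [Category C] [DaggerKernelCategory C]
    {X Y : C} (s : X ⟶ X) (t : Y ⟶ Y)
    (hs : s ≫ s = s) (hsd : dag s = s)
    (ht : t ≫ t = t) (htd : dag t = t)
    (f : X ⟶ Y) (hf1 : s ≫ f = f) (hf2 : f ≫ t = f) :
    let k : Ker f ⟶ X := ker f
    let s' : Ker f ⟶ Ker f := k ≫ s ≫ dag k
    -- s' is a self-adjoint idempotent, i.e. an object (K, s') of the envelope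
    (s' ≫ s' = s' ∧ dag s' = s') ∧
    -- s ∘ k is a morphism (K,s') → (X,s) of the envelope
    (s' ≫ (k ≫ s) = k ≫ s ∧ (k ≫ s) ≫ s = k ≫ s) ∧
    -- s ∘ k is a dagger mono in the envelope
    ((k ≫ s) ≫ dag (k ≫ s) = s') ∧
    -- f ∘ (s ∘ k) is the zero morphism
    ((k ≫ s) ≫ f = zero _ _) ∧
    -- universal property: it is the kernel of f in the envelope
    (∀ (Z : C) (r : Z ⟶ Z), r ≫ r = r → dag r = r →
      ∀ g : Z ⟶ X, r ≫ g = g → g ≫ s = g → g ≫ f = zero _ _ →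
        ∃! h : Z ⟶ Ker f, (r ≫ h = h ∧ h ≫ s' = h) ∧ h ≫ (k ≫ s) = g) := by
  intro k s'
  have lemA : ∀ {Z : C} (g : Z ⟶ X), g ≫ f = zero _ _ → (g ≫ dag k) ≫ k = g := by
    intro Z g hg
    obtain ⟨h, hh, -⟩ := ker_lift f g hg
    have h1 : g ≫ dag k = h := by
      rw [← hh, Category.assoc, ker_dagger_mono, Category.comp_id]
    rw [h1, hh]
  have hksf : (k ≫ s) ≫ f = zero _ _ := by
    rw [Category.assoc, hf1, ker_comp]
  have hksA : ((k ≫ s) ≫ dag k) ≫ k = k ≫ s := lemA _ hksf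
  have hidem : s' ≫ s' = s' := by
    show (k ≫ s ≫ dag k) ≫ k ≫ s ≫ dag k = k ≫ s ≫ dag k
    calc (k ≫ s ≫ dag k) ≫ k ≫ s ≫ dag k
        = (((k ≫ s) ≫ dag k) ≫ k) ≫ s ≫ dag k := by simp [Category.assoc]
      _ = (k ≫ s) ≫ s ≫ dag k := by rw [hksA, Category.assoc]
      _ = k ≫ (s ≫ s) ≫ dag k := by simp [Category.assoc]
      _ = k ≫ s ≫ dag k := by rw [hs]
  refine ⟨⟨hidem, ?_⟩, ⟨?_, ?_⟩, ?_, hksf, ?_⟩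
  · show dag (k ≫ s ≫ dag k) = k ≫ s ≫ dag k
    rw [dag_comp, dag_comp, dag_dag, hsd, Category.assoc]
  · show (k ≫ s ≫ dag k) ≫ k ≫ s = k ≫ s
    calc (k ≫ s ≫ dag k) ≫ k ≫ s
        = ((((k ≫ s) ≫ dag k) ≫ k) ≫ s) := by simp [Category.assoc]
      _ = (k ≫ s) ≫ s := by rw [hksA]
      _ = k ≫ s := by rw [Category.assoc, hs]
  · rw [Category.assoc, hs]
  · show (k ≫ s) ≫ dag (k ≫ s) = k ≫ s ≫ dag k
    rw [dag_comp, hsd]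
    calc (k ≫ s) ≫ s ≫ dag k = k ≫ (s ≫ s) ≫ dag k := by simp [Category.assoc]
      _ = k ≫ s ≫ dag k := by rw [hs]
  · intro Z r hr hrd g hrg hgs hgf
    have hgA : (g ≫ dag k) ≫ k = g := lemA g hgf
    refine ⟨g ≫ dag k, ⟨⟨?_, ?_⟩, ?_⟩, ?_⟩
    · rw [← Category.assoc, hrg]
    · show (g ≫ dag k) ≫ k ≫ s ≫ dag k = g ≫ dag k
      calc (g ≫ dag k) ≫ k ≫ s ≫ dag k
          = (((g ≫ dag k) ≫ k) ≫ s) ≫ dag k := by simp [Category.assoc]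
        _ = g ≫ dag k := by rw [hgA, hgs]
    · rw [← Category.assoc, hgA, hgs]
    · rintro h' ⟨⟨-, hs'⟩, hk⟩
      have : h' ≫ s' = h' := hs'
      calc h' = h' ≫ k ≫ s ≫ dag k := this.symm
        _ = (h' ≫ k ≫ s) ≫ dag k := by simp [Category.assoc]
        _ = g ≫ dag k := by rw [← Category.assoc] at hk ⊢; rw [hk]
end

section
/- Let S be a Foulis semigroup. Then in the dagger Karoubi envelope of S (viewed as a one-object dagger category), for every morphism f : s → t, the element s·⟦f⟧ is a self-adjoint idempotent and s·⟦f⟧ : (s·⟦f⟧) → s is a dagger kernel of f. Consequently the dagger Karoubi envelope of S is a dagger kernel category, with zero object the element 0 = ⟦1⟧. -/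
/-- A Foulis semigroup (Baer *-semigroup): an involutive monoid with an
operation ⟦-⟧ (here `proj`) such that each ⟦s⟧ is a self-adjoint idempotent,
0 := ⟦1⟧ is a two-sided zero, and s·x = 0 iff x factors through ⟦s⟧. -/
class FoulisSemigroup (S : Type*) extends Monoid S where
  dag : S → S
  dag_one : dag 1 = 1
  dag_mul : ∀ s t : S, dag (s * t) = dag t * dag s
  dag_dag : ∀ s : S, dag (dag s) = s
  proj : S → S
  proj_idem : ∀ s : S, proj s * proj s = proj s
  proj_dag : ∀ s : S, dag (proj s) = proj s
  zero_mul' : ∀ s : S, proj 1 * s = proj 1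
  mul_zero' : ∀ s : S, s * proj 1 = proj 1
  proj_spec : ∀ s x : S, s * x = proj 1 ↔ ∃ y : S, x = proj s * y

open FoulisSemigroup in
/-- In the dagger Karoubi envelope of a Foulis semigroup S (objects:
self-adjoint idempotents; morphisms f : s → t: elements f with f·s = f = t·f;
composition: multiplication; identity on s: s itself), every morphism
f : s → t has the dagger kernel s·⟦f⟧ : (s·⟦f⟧) → s, and ⟦1⟧ is a zero object;
hence the envelope is a dagger kernel category. -/
theorem foulis_karoubi_kernels (S : Type*) [FoulisSemigroup S]
    (s t f : S) (hs : s * s = s) (hsd : dag s = s)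
    (ht : t * t = t) (htd : dag t = t)
    (hf1 : f * s = f) (hf2 : t * f = f) :
    -- s·⟦f⟧ is a self-adjoint idempotent, i.e. an object of the envelope
    ((s * proj f) * (s * proj f) = s * proj f ∧ dag (s * proj f) = s * proj f) ∧
    -- s·⟦f⟧ is a morphism (s·⟦f⟧) → s
    (s * (s * proj f) = s * proj f) ∧
    -- it is a dagger mono: (s·⟦f⟧)† ∘ (s·⟦f⟧) equals the identity on s·⟦f⟧
    (dag (s * proj f) * (s * proj f) = s * proj f) ∧
    -- f ∘ (s·⟦f⟧) is the zero morphism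
    (f * (s * proj f) = proj 1) ∧
    -- universal property of the kernel
    (∀ r g : S, r * r = r → dag r = r → g * r = g → s * g = g →
      f * g = proj 1 →
      ∃! h : S, (h * r = h ∧ (s * proj f) * h = h) ∧ (s * proj f) * h = g) ∧
    -- 0 = ⟦1⟧ is a zero object of the envelope
    (∀ u : S, u * u = u → dag u = u →
      (∃! z : S, z * u = z ∧ proj 1 * z = z) ∧
      (∃! z : S, z * proj 1 = z ∧ u * z = z)) := by
  -- basic facts
  have fproj : f * proj f = proj 1 := by
    rw [proj_spec]; exact ⟨1, (mul_one _).symm⟩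
  have hfk : f * (s * proj f) = proj 1 := by
    rw [← mul_assoc, hf1, fproj]
  have hfac : ∃ y : S, s * proj f = proj f * y := (proj_spec f (s * proj f)).mp hfk
  obtain ⟨y, hy⟩ := hfac
  have hpk : proj f * (s * proj f) = s * proj f := by
    rw [hy, ← mul_assoc, proj_idem]
  have hidem : (s * proj f) * (s * proj f) = s * proj f := by
    rw [mul_assoc, hpk, ← mul_assoc, hs]
  have hdk : dag (s * proj f) * (s * proj f) = s * proj f := by
    rw [dag_mul, proj_dag, hsd, mul_assoc, ← mul_assoc s s, hs, hpk]
  have hsa : dag (s * proj f) = s * proj f := by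
    conv_lhs => rw [← hdk]
    rw [dag_mul, dag_dag, hdk]
  refine ⟨⟨hidem, hsa⟩, by rw [← mul_assoc, hs], by rw [hsa, hidem], hfk, ?_, ?_⟩
  · intro r g hr hrd hgr hsg hfg
    obtain ⟨y', hy'⟩ := (proj_spec f g).mp hfg
    have hkg : (s * proj f) * g = g := by
      rw [mul_assoc, hy', ← mul_assoc (proj f), proj_idem, ← hy', hsg]
    exact ⟨g, ⟨⟨hgr, hkg⟩, hkg⟩, fun h ⟨⟨_, h2⟩, h3⟩ => by rw [← h2, h3]⟩
  · intro u hu hud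
    constructor
    · exact ⟨proj 1, ⟨zero_mul' u, zero_mul' _⟩, fun z ⟨_, hz2⟩ => by rw [← hz2, zero_mul']⟩
    · exact ⟨proj 1, ⟨mul_zero' _, mul_zero' u⟩, fun z ⟨hz1, _⟩ => by rw [← hz1, mul_zero']⟩
end

section
/- In a Foulis semigroup, the axiom 's·x = 0 iff ∃y. x = ⟦s⟧·y' (together with axioms 1–3) is equivalent to the conjunction: ⟦0⟧ = 1, s·⟦s⟧ = 0, and t = ⟦⟦t†·s†⟧·s⟧·t for all s, t. -/
/-- An involutive monoid with a map ⟦-⟧ (`proj`) landing in self-adjoint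
idempotents such that 0 := ⟦1⟧ is a two-sided zero (axioms 1–3 of a Foulis
semigroup). -/
class PreFoulis (S : Type*) extends Monoid S where
  dag : S → S
  dag_one : dag 1 = 1
  dag_mul : ∀ s t : S, dag (s * t) = dag t * dag s
  dag_dag : ∀ s : S, dag (dag s) = s
  proj : S → S
  proj_idem : ∀ s : S, proj s * proj s = proj s
  proj_dag : ∀ s : S, dag (proj s) = proj s
  zero_mul' : ∀ s : S, proj 1 * s = proj 1
  mul_zero' : ∀ s : S, s * proj 1 = proj 1

open PreFoulis in
/-- Axiom (4) of a Foulis semigroup is equivalent, given axioms 1–3, to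
axiom (4'): ⟦0⟧ = 1, s·⟦s⟧ = 0, and t = ⟦⟦t†·s†⟧·s⟧·t. -/
theorem foulis_axiom_equiv (S : Type*) [PreFoulis S] :
    (∀ s x : S, s * x = proj 1 ↔ ∃ y : S, x = proj s * y) ↔
      (proj (proj (1 : S)) = 1 ∧
       (∀ s : S, s * proj s = proj 1) ∧
       (∀ s t : S, t = proj (proj (dag t * dag s) * s) * t)) := by
  constructor
  · intro h
    have habs : ∀ s x : S, s * x = proj 1 → proj s * x = x := by
      intro s x hx
      obtain ⟨y, hy⟩ := (h s x).mp hx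
      rw [hy, ← mul_assoc, proj_idem]
    have hb : ∀ s : S, s * proj s = proj 1 := by
      intro s
      exact (h s (proj s)).mpr ⟨proj s, (proj_idem s).symm⟩
    refine ⟨?_, hb, ?_⟩
    · have h1 : proj (proj (1 : S)) * 1 = 1 := habs _ _ (mul_one _)
      rwa [mul_one] at h1
    · intro s t
      have key : (proj (dag t * dag s) * s) * t = proj 1 := by
        have := hb (dag t * dag s)
        have hd := congrArg dag this
        rw [dag_mul, proj_dag, dag_mul, dag_dag, dag_dag, proj_dag] at hd
        rw [mul_assoc]; exact hd
      exact (habs _ _ key).symm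
  · rintro ⟨h0, hb, hc⟩ s x
    constructor
    · intro hx
      refine ⟨x, ?_⟩
      have := hc s x
      have hd : dag x * dag s = proj 1 := by
        have := congrArg dag hx
        rwa [dag_mul, proj_dag] at this
      rw [hd, h0, one_mul] at this
      exact this
    · rintro ⟨y, rfl⟩
      rw [← mul_assoc, hb, zero_mul']
end

section
/- Let S be a Foulis semigroup and s ∈ S a self-adjoint idempotent. The set Hom(s) = {t ∈ S : s·t = t = t·s} is itself a Foulis semigroup with multiplication ·, unit s, involution †, and operation ⟦t⟧_s := s·⟦t⟧·s. -/
open FoulisSemigroup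

/-- Every element annihilates its own projection. -/
lemma Foulis.mul_proj_self {S : Type*} [FoulisSemigroup S] (t : S) :
    t * proj t = proj 1 :=
  (proj_spec t (proj t)).2 ⟨1, (mul_one _).symm⟩

/-- If `t * s = t` with `s` self-adjoint, then `s` commutes with `proj t`. -/
lemma Foulis.comm_proj {S : Type*} [FoulisSemigroup S] {s t : S}
    (hsd : dag s = s) (hts : t * s = t) : s * proj t = proj t * s := by
  have h0 : t * (s * proj t) = proj 1 := by
    rw [← mul_assoc, hts, Foulis.mul_proj_self]
  obtain ⟨y, hy⟩ := (proj_spec t _).1 h0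
  have h1 : proj t * (s * proj t) = s * proj t := by
    rw [hy, ← mul_assoc, proj_idem]
  have h2 := congrArg dag h1
  rw [dag_mul, dag_mul, hsd, proj_dag, mul_assoc] at h2
  -- h2 : proj t * (s * proj t) = proj t * s
  rw [h1] at h2
  exact h2

open FoulisSemigroup in
/-- For a self-adjoint idempotent s in a Foulis semigroup S, the endo-homset
Hom(s) = {t : s·t = t = t·s} is itself a Foulis semigroup, with multiplication
inherited from S, unit s, involution †, and ⟦t⟧ₛ = s·⟦t⟧·s. -/
theorem foulis_endo_homset (S : Type*) [FoulisSemigroup S] (s : S)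
    (hs : s * s = s) (hsd : dag s = s) :
    ∃ inst : FoulisSemigroup {t : S // s * t = t ∧ t * s = t},
      letI := inst
      (∀ a b : {t : S // s * t = t ∧ t * s = t},
        ((a * b : {t : S // s * t = t ∧ t * s = t}) : S) = (a : S) * (b : S)) ∧
      (((1 : {t : S // s * t = t ∧ t * s = t}) : S) = s) ∧
      (∀ a : {t : S // s * t = t ∧ t * s = t},
        ((dag a : {t : S // s * t = t ∧ t * s = t}) : S) = dag (a : S)) ∧
      (∀ a : {t : S // s * t = t ∧ t * s = t},
        ((proj a : {t : S // s * t = t ∧ t * s = t}) : S) = s * proj (a : S) * s) := by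
  -- basic facts
  have hzero_l : ∀ x : S, proj (1 : S) * x = proj 1 := zero_mul'
  have hzero_r : ∀ x : S, x * proj (1 : S) = proj 1 := mul_zero'
  have hsproj : s * proj s * s = proj 1 := by
    rw [Foulis.mul_proj_self s, hzero_l]
  -- the monoid structure on the homset
  letI instMon : Monoid {t : S // s * t = t ∧ t * s = t} :=
    { mul := fun a b => ⟨a.1 * b.1,
        by rw [← mul_assoc, a.2.1], by rw [mul_assoc, b.2.2]⟩
      one := ⟨s, hs, hs⟩
      mul_assoc := fun a b c => Subtype.ext (mul_assoc a.1 b.1 c.1)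
      one_mul := fun a => Subtype.ext a.2.1
      mul_one := fun a => Subtype.ext a.2.2 }
  refine ⟨{ toMonoid := instMon
            dag := fun a => ⟨dag a.1,
              by conv_rhs => rw [← a.2.2, dag_mul, hsd],
              by conv_rhs => rw [← a.2.1, dag_mul, hsd]⟩
            dag_one := Subtype.ext hsd
            dag_mul := fun a b => Subtype.ext (dag_mul a.1 b.1)
            dag_dag := fun a => Subtype.ext (dag_dag a.1)
            proj := fun a => ⟨s * proj a.1 * s,
              by simp only [← mul_assoc, hs],
              by simp only [mul_assoc, hs]⟩
            proj_idem := ?_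
            proj_dag := ?_
            zero_mul' := ?_
            mul_zero' := ?_
            proj_spec := ?_ },
         fun a b => rfl, rfl, fun a => rfl, fun a => rfl⟩
  · -- proj_idem
    rintro ⟨t, ht1, ht2⟩
    apply Subtype.ext
    show (s * proj t * s) * (s * proj t * s) = s * proj t * s
    have hcomm := Foulis.comm_proj hsd ht2
    have key : proj t * s * proj t = s * proj t := by
      rw [← hcomm, mul_assoc, proj_idem]
    have hval : s * proj t * s = s * proj t := by rw [hcomm, mul_assoc, hs]
    rw [hval, mul_assoc s (proj t) (s * proj t), ← mul_assoc (proj t) s (proj t),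
      key, ← mul_assoc, hs]
  · -- proj_dag
    rintro ⟨t, ht1, ht2⟩
    apply Subtype.ext
    show dag (s * proj t * s) = s * proj t * s
    rw [dag_mul, dag_mul, hsd, proj_dag, mul_assoc]
  · -- zero_mul'
    rintro ⟨t, ht1, ht2⟩
    apply Subtype.ext
    show (s * proj s * s) * t = s * proj s * s
    rw [hsproj, hzero_l]
  · -- mul_zero'
    rintro ⟨t, ht1, ht2⟩
    apply Subtype.ext
    show t * (s * proj s * s) = s * proj s * s
    rw [hsproj, hzero_r]
  · -- proj_spec
    rintro ⟨t, ht1, ht2⟩ ⟨x, hx1, hx2⟩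
    constructor
    · intro h
      have h' : t * x = s * proj s * s := congrArg Subtype.val h
      rw [hsproj] at h'
      obtain ⟨y, hy⟩ := (proj_spec t x).1 h'
      refine ⟨⟨x, hx1, hx2⟩, ?_⟩
      apply Subtype.ext
      show x = (s * proj t * s) * x
      rw [mul_assoc, hx1, mul_assoc, hy, ← mul_assoc (proj t), proj_idem, ← hy, hx1]
    · rintro ⟨⟨y, hy1, hy2⟩, hxy⟩
      have hx : x = (s * proj t * s) * y := congrArg Subtype.val hxy
      apply Subtype.ext
      show t * x = s * proj s * s
      rw [hsproj, hx, ← mul_assoc, ← mul_assoc, ← mul_assoc, ht2,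
        Foulis.mul_proj_self, hzero_l, hzero_l]
end
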